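/- arXiv:1806.09543 — 2 statements merged into one kernel-verified Lean document; each statement's English description precedes it below -/
import Mathlib

section
/- Let X be an abelian group and F : X → X an endomorphism (of abelian groups) such that F^k − 1 is injective for every integer k ≥ 1. Fix m ≥ 1 and let Tr_m = id + F + F^2 + ... + F^{m−1}. Then Tr_m descends to a well-defined map from X/(F−1)X to X/(F^m−1)X, and this induced map is a bijection from X/(F−1)X onto the set of F-fixed points of X/(F^m−1)X (where F acts on the quotient since F commutes with F^m−1). -/
/-!
Write `T = 1 + F + ⋯ + F^{m-1}`. Both `T * (F - 1)` and `(F - 1) * T` equal `F^m - 1`, so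
`range (F^m - 1)` is the image of `range (F - 1)` under `T` and also the image of `range T`
under `F - 1`. Injectivity of `T` (a factor of `F^m - 1`) makes the induced map
`X/(F-1)X → X/(F^m-1)X` injective; injectivity of `F - 1` shows that a class `[x]` fixed by
`F`, i.e. with `(F - 1) x ∈ range (F^m - 1)`, has `x ∈ range T`.
-/

open LinearMap Submodule

namespace Module.End

variable {R M : Type*} [Ring R] [AddCommGroup M] [Module R M] (F : Module.End R M) (m : ℕ)

theorem map_geom_sum_range_sub_one :
    (range (F - 1)).map (∑ i ∈ Finset.range m, F ^ i) = range (F ^ m - 1) := by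
  rw [← range_comp, ← mul_eq_comp, geom_sum_mul]

theorem map_sub_one_range_geom_sum :
    (range (∑ i ∈ Finset.range m, F ^ i)).map (F - 1) = range (F ^ m - 1) := by
  rw [← range_comp, ← mul_eq_comp, mul_geom_sum]

theorem injective_geom_sum_of_injective_pow_sub_one (h : Function.Injective ⇑(F ^ m - 1)) :
    Function.Injective ⇑(∑ i ∈ Finset.range m, F ^ i) := by
  rw [← mul_geom_sum, mul_eq_comp, coe_comp] at h
  exact h.of_comp

theorem mk_apply_eq_mk_iff (p : Submodule R M) (x : M) :
    (Submodule.Quotient.mk (F x) : M ⧸ p) = Submodule.Quotient.mk x ↔ (F - 1) x ∈ p := by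
  rw [Submodule.Quotient.eq, LinearMap.sub_apply, one_apply]

def traceQ : (M ⧸ range (F - 1)) →ₗ[R] M ⧸ range (F ^ m - 1) :=
  mapQ _ _ (∑ i ∈ Finset.range m, F ^ i)
    (map_le_iff_le_comap.1 (map_geom_sum_range_sub_one F m).le)

@[simp]
theorem traceQ_mk (x : M) :
    traceQ F m (Submodule.Quotient.mk x) =
      Submodule.Quotient.mk ((∑ i ∈ Finset.range m, F ^ i) x) :=
  mapQ_apply _ _ _ x

theorem injective_traceQ (h : Function.Injective ⇑(F ^ m - 1)) :
    Function.Injective (traceQ F m) := by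
  rw [← ker_eq_bot, traceQ, ker_mapQ, ← map_geom_sum_range_sub_one,
    comap_map_eq_of_injective (injective_geom_sum_of_injective_pow_sub_one F m h), mkQ_map_self]

theorem range_traceQ (h : Function.Injective ⇑(F - 1)) :
    Set.range (traceQ F m) = {c : M ⧸ range (F ^ m - 1) |
      ∃ x : M, Submodule.Quotient.mk x = c ∧ Submodule.Quotient.mk (F x) = c} := by
  ext c
  constructor
  · rintro ⟨q, rfl⟩
    obtain ⟨x, rfl⟩ := Submodule.Quotient.mk_surjective _ q
    refine ⟨_, (traceQ_mk F m x).symm, ?_⟩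
    rw [traceQ_mk, mk_apply_eq_mk_iff, ← map_sub_one_range_geom_sum]
    exact mem_map_of_mem (mem_range_self _ x)
  · rintro ⟨x, rfl, hFx⟩
    rw [mk_apply_eq_mk_iff, ← map_sub_one_range_geom_sum, ← mem_comap,
      comap_map_eq_of_injective h] at hFx
    obtain ⟨y, rfl⟩ := hFx
    exact ⟨Submodule.Quotient.mk y, traceQ_mk F m y⟩

end Module.End

/-- The trace map `Tr_m = 1 + F + ... + F^{m-1}` descends to a bijection from
`X/(F-1)X` onto the `F`-fixed points of `X/(F^m-1)X`. -/
theorem stmt0 (X : Type*) [AddCommGroup X] (F : Module.End ℤ X)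
    (hinj : ∀ k : ℕ, 1 ≤ k → Function.Injective ⇑(F ^ k - (1 : Module.End ℤ X)))
    (m : ℕ) (hm : 1 ≤ m) :
    ∃ g : (X ⧸ LinearMap.range (F - 1)) →ₗ[ℤ] (X ⧸ LinearMap.range (F ^ m - 1)),
      (∀ x : X, g (Submodule.Quotient.mk x) =
          Submodule.Quotient.mk ((∑ i ∈ Finset.range m, F ^ i) x)) ∧
      Function.Injective g ∧
      Set.range g = {c : X ⧸ LinearMap.range (F ^ m - 1) |
        ∃ x : X, Submodule.Quotient.mk x = c ∧ Submodule.Quotient.mk (F x) = c} :=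
  ⟨Module.End.traceQ F m, Module.End.traceQ_mk F m,
    Module.End.injective_traceQ F m (hinj m hm),
    Module.End.range_traceQ F m (by simpa using hinj 1 le_rfl)⟩
end

section
/- Let p be a prime, Y a finitely generated free abelian group, and D the subgroup of ℚ/ℤ consisting of elements of order prime to p (the prime-to-p torsion of ℚ/ℤ). Let φ : Y → Y be an injective group endomorphism whose cokernel Y/φ(Y) is finite of order prime to p. Then the induced map φ ⊗ id : Y ⊗ D → Y ⊗ D is surjective, and its kernel is isomorphic (as an abelian group) to Y/φ(Y). -/
/-!
Let `n = |Y/φY|`, so that `φ ∘ ψ = n` for some `ψ : Y → Y`. Multiplication by `n` is onto `D`,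
hence `(φ ⊗ id) ∘ (ψ ⊗ id) = n` is onto `Y ⊗ D`. Every tensor in `Y ⊗ D` has the form `y ⊗ 1/m`
with `p ∤ m`, and since `Y` is free, `y ⊗ 1/m = 0` only if `m ∣ y`. From this one checks that
`y ↦ ψ y ⊗ 1/n` maps `Y` onto `ker (φ ⊗ id)` with kernel `φ(Y)`.
-/

open TensorProduct

theorem Module.Basis.exists_eq_smul_of_forall_dvd_repr {ι R M : Type*} [Semiring R]
    [AddCommMonoid M] [Module R M] (b : Module.Basis ι R M) {c : R} {y : M}
    (h : ∀ i, c ∣ b.repr y i) : ∃ w, y = c • w := by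
  choose f hf using h
  refine ⟨(b.repr y).sum fun i _ => f i • b i, ?_⟩
  conv_lhs => rw [← b.linearCombination_repr y, Finsupp.linearCombination_apply]
  simp only [Finsupp.sum, Finset.smul_sum, smul_smul, ← hf]

theorem Module.Basis.repr_smul_eq_zero_of_tmul_eq_zero {ι R M N : Type*} [CommSemiring R]
    [AddCommMonoid M] [Module R M] [AddCommMonoid N] [Module R N] (b : Module.Basis ι R M)
    {y : M} {x : N} (h : y ⊗ₜ[R] x = 0) (i : ι) : b.repr y i • x = 0 := by
  simpa using congrArg (TensorProduct.lid R N ∘ (b.coord i).rTensor N) h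

theorem Submodule.natCard_quotient_smul_mem {Y : Type*} [AddCommGroup Y] (P : Submodule ℤ Y)
    (y : Y) : (Nat.card (Y ⧸ P) : ℤ) • y ∈ P := by
  rw [← Submodule.Quotient.mk_eq_zero, Submodule.Quotient.mk_smul, natCast_zsmul]
  exact card_nsmul_eq_zero'

theorem LinearMap.exists_comp_eq_smul_of_injective {R M N : Type*} [CommRing R] [AddCommGroup M]
    [Module R M] [AddCommGroup N] [Module R N] {φ : M →ₗ[R] N} (hφ : Function.Injective φ) (c : R)
    (h : ∀ y, c • y ∈ LinearMap.range φ) : ∃ ψ : N →ₗ[R] M, φ ∘ₗ ψ = c • LinearMap.id :=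
  ⟨(LinearEquiv.ofInjective φ hφ).symm.toLinearMap ∘ₗ
      (c • LinearMap.id).codRestrict (LinearMap.range φ) h,
    LinearMap.ext fun y => by simp⟩

theorem LinearMap.rTensor_surjective_of_comp_eq_smul {R M N Q : Type*} [CommRing R]
    [AddCommGroup M] [Module R M] [AddCommGroup N] [Module R N] [AddCommGroup Q] [Module R Q]
    {φ : M →ₗ[R] N} {ψ : N →ₗ[R] M} {c : R} (hφψ : φ ∘ₗ ψ = c • LinearMap.id)
    (hc : Function.Surjective fun x : Q => c • x) : Function.Surjective (φ.rTensor Q) := by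
  intro t
  obtain ⟨s, rfl⟩ := LinearMap.lTensor_surjective N (g := c • LinearMap.id) hc t
  refine ⟨ψ.rTensor Q s, ?_⟩
  rw [← LinearMap.comp_apply, ← LinearMap.rTensor_comp, hφψ, LinearMap.rTensor_smul,
    LinearMap.lTensor_smul, LinearMap.rTensor_id, LinearMap.lTensor_id]

abbrev QmodZ : Type := ℚ ⧸ AddSubgroup.zmultiples (1 : ℚ)

namespace QmodZ

-- The class of `1 / m`; `recip 0 = 0`.
def recip (m : ℕ) : QmodZ := ((m : ℚ)⁻¹ : ℚ)

theorem coe_eq_zero_iff {q : ℚ} : (q : QmodZ) = 0 ↔ ∃ k : ℤ, (k : ℚ) = q := by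
  simp [QuotientAddGroup.eq_zero_iff, AddSubgroup.mem_zmultiples_iff]

theorem recip_one : recip 1 = 0 := by
  simp [recip]

theorem nsmul_recip_mul (a : ℕ) {b : ℕ} (hb : b ≠ 0) : b • recip (a * b) = recip a := by
  rw [recip, recip, ← QuotientAddGroup.mk_nsmul, nsmul_eq_mul]
  push_cast
  rw [mul_inv, mul_left_comm, mul_inv_cancel₀ (by exact_mod_cast hb), mul_one]

theorem nsmul_recip_self (m : ℕ) : m • recip m = 0 := by
  rcases eq_or_ne m 0 with rfl | hm
  · exact zero_nsmul _
  · simpa [recip_one] using nsmul_recip_mul 1 hm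

theorem zsmul_recip_eq_zero_iff {m : ℕ} (hm : m ≠ 0) (c : ℤ) :
    c • recip m = 0 ↔ (m : ℤ) ∣ c := by
  have hm' : (m : ℚ) ≠ 0 := by exact_mod_cast hm
  rw [recip, ← QuotientAddGroup.mk_zsmul, coe_eq_zero_iff, zsmul_eq_mul]
  constructor
  · rintro ⟨k, hk⟩
    refine ⟨k, ?_⟩
    rw [eq_mul_inv_iff_mul_eq₀ hm'] at hk
    exact_mod_cast hk.symm.trans (mul_comm _ _)
  · rintro ⟨k, rfl⟩
    exact ⟨k, by push_cast; field_simp⟩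

theorem addOrderOf_ne_zero (x : QmodZ) : addOrderOf x ≠ 0 := by
  induction x using QuotientAddGroup.induction_on with | H q => ?_
  refine (IsOfFinAddOrder.addOrderOf_pos ?_).ne'
  refine isOfFinAddOrder_iff_nsmul_eq_zero.mpr ⟨q.den, q.den_pos, ?_⟩
  rw [← QuotientAddGroup.mk_nsmul, nsmul_eq_mul, Rat.den_mul_eq_num, coe_eq_zero_iff]
  exact ⟨q.num, rfl⟩

theorem exists_eq_zsmul_recip_addOrderOf (x : QmodZ) : ∃ k : ℤ, x = k • recip (addOrderOf x) := by
  induction x using QuotientAddGroup.induction_on with | H q => ?_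
  set m := addOrderOf (q : QmodZ)
  have hm : (m : ℚ) ≠ 0 := by exact_mod_cast addOrderOf_ne_zero _
  obtain ⟨k, hk⟩ := coe_eq_zero_iff.mp
    (by rw [← nsmul_eq_mul, QuotientAddGroup.mk_nsmul]; exact addOrderOf_nsmul_eq_zero _ :
      ((m * q : ℚ) : QmodZ) = 0)
  refine ⟨k, ?_⟩
  rw [recip, ← QuotientAddGroup.mk_zsmul, zsmul_eq_mul, hk, mul_comm (m : ℚ), mul_assoc,
    mul_inv_cancel₀ hm, mul_one]

theorem addOrderOf_recip_dvd (m : ℕ) : addOrderOf (recip m) ∣ m :=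
  addOrderOf_dvd_of_nsmul_eq_zero (nsmul_recip_self m)

variable {p : ℕ} {D : AddSubgroup QmodZ} {Y : Type*} [AddCommGroup Y] {φ ψ : Y →ₗ[ℤ] Y} {n : ℕ}

theorem recip_mem (hD : ∀ x, x ∈ D ↔ (addOrderOf x).Coprime p) {m : ℕ} (hm : m.Coprime p) :
    recip m ∈ D :=
  (hD _).mpr (hm.coprime_dvd_left (addOrderOf_recip_dvd m))

theorem exists_eq_zsmul_recip_of_mem (hD : ∀ x, x ∈ D ↔ (addOrderOf x).Coprime p) {x : QmodZ}
    (hx : x ∈ D) : ∃ m : ℕ, m ≠ 0 ∧ m.Coprime p ∧ ∃ k : ℤ, x = k • recip m :=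
  ⟨addOrderOf x, addOrderOf_ne_zero x, (hD x).mp hx, exists_eq_zsmul_recip_addOrderOf x⟩

theorem zsmul_surjective (hD : ∀ x, x ∈ D ↔ (addOrderOf x).Coprime p) (hn0 : n ≠ 0)
    (hn : n.Coprime p) : Function.Surjective fun d : D => (n : ℤ) • d := by
  rintro ⟨x, hx⟩
  obtain ⟨m, -, hm, k, rfl⟩ := exists_eq_zsmul_recip_of_mem hD hx
  refine ⟨k • ⟨recip (m * n), recip_mem hD (hm.mul_left hn)⟩, Subtype.ext ?_⟩
  simp only [AddSubgroup.coe_zsmul, smul_comm (n : ℤ) k, natCast_zsmul, AddSubgroup.coe_nsmul,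
    nsmul_recip_mul m hn0]

theorem exists_eq_tmul_recip (hD : ∀ x, x ∈ D ↔ (addOrderOf x).Coprime p) (t : Y ⊗[ℤ] D) :
    ∃ m : ℕ, m ≠ 0 ∧ m.Coprime p ∧ ∃ (d : D) (y : Y), (d : QmodZ) = recip m ∧ t = y ⊗ₜ d := by
  induction t using TensorProduct.induction_on with
  | zero =>
    exact ⟨1, one_ne_zero, Nat.coprime_one_left p, 0, 0, recip_one.symm, (zero_tmul _ _).symm⟩
  | tmul y d =>
    obtain ⟨m, hm0, hm, k, hk⟩ := exists_eq_zsmul_recip_of_mem hD d.2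
    refine ⟨m, hm0, hm, ⟨recip m, recip_mem hD hm⟩, k • y, rfl, ?_⟩
    rw [smul_tmul]
    congr 1
    exact Subtype.ext hk
  | add t₁ t₂ ih₁ ih₂ =>
    obtain ⟨m₁, hm₁0, hm₁, d₁, y₁, hd₁, rfl⟩ := ih₁
    obtain ⟨m₂, hm₂0, hm₂, d₂, y₂, hd₂, rfl⟩ := ih₂
    set d : D := ⟨recip (m₁ * m₂), recip_mem hD (hm₁.mul_left hm₂)⟩
    have h₁ : d₁ = (m₂ : ℤ) • d := Subtype.ext <| by
      simp [d, hd₁, natCast_zsmul, nsmul_recip_mul m₁ hm₂0]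
    have h₂ : d₂ = (m₁ : ℤ) • d := Subtype.ext <| by
      simp [d, hd₂, natCast_zsmul, mul_comm m₁, nsmul_recip_mul m₂ hm₁0]
    refine ⟨m₁ * m₂, mul_ne_zero hm₁0 hm₂0, hm₁.mul_left hm₂, d,
      (m₂ : ℤ) • y₁ + (m₁ : ℤ) • y₂, rfl, ?_⟩
    rw [h₁, h₂, add_tmul, smul_tmul, smul_tmul]

theorem exists_eq_smul_of_tmul_eq_zero [Module.Free ℤ Y] {m : ℕ}
    (hm : m ≠ 0) {d : D} (hd : (d : QmodZ) = recip m) {y : Y} (h : y ⊗ₜ[ℤ] d = 0) :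
    ∃ w, y = (m : ℤ) • w := by
  let b := Module.Free.chooseBasis ℤ Y
  refine b.exists_eq_smul_of_forall_dvd_repr fun i => ?_
  rw [← zsmul_recip_eq_zero_iff hm, ← hd]
  exact congrArg Subtype.val (b.repr_smul_eq_zero_of_tmul_eq_zero h i)

theorem smul_tmul_recip_eq_zero {d : D} (hd : (d : QmodZ) = recip n) (y : Y) :
    ((n : ℤ) • y) ⊗ₜ[ℤ] d = 0 := by
  have hnd : (n : ℤ) • d = 0 := Subtype.ext <| by simp [hd, natCast_zsmul, nsmul_recip_self]
  rw [smul_tmul, hnd, tmul_zero]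

theorem ker_flip_mk_comp [Module.Free ℤ Y] (hφ : Function.Injective φ)
    (hφψ : ∀ y, φ (ψ y) = (n : ℤ) • y) (hn0 : n ≠ 0) {d : D} (hd : (d : QmodZ) = recip n) :
    LinearMap.ker ((TensorProduct.mk ℤ Y D).flip d ∘ₗ ψ) = LinearMap.range φ := by
  have hψφ (w : Y) : ψ (φ w) = (n : ℤ) • w := hφ <| by rw [hφψ, map_smul]
  ext x
  simp only [LinearMap.mem_ker, LinearMap.comp_apply, LinearMap.flip_apply, mk_apply,
    LinearMap.mem_range]
  constructor
  · intro hx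
    obtain ⟨w, hw⟩ := exists_eq_smul_of_tmul_eq_zero hn0 hd hx
    refine ⟨w, smul_right_injective Y (by exact_mod_cast hn0 : (n : ℤ) ≠ 0) ?_⟩
    dsimp only
    rw [← map_smul, ← hw, hφψ]
  · rintro ⟨w, rfl⟩
    rw [hψφ, smul_tmul_recip_eq_zero hd]

theorem exists_tmul_eq_of_rTensor_apply_eq_zero [Module.Free ℤ Y]
    (hD : ∀ x, x ∈ D ↔ (addOrderOf x).Coprime p) (hφ : Function.Injective φ)
    (hφψ : ∀ y, φ (ψ y) = (n : ℤ) • y) (hn0 : n ≠ 0) (hn : n.Coprime p) {d : D}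
    (hd : (d : QmodZ) = recip n) {t : Y ⊗[ℤ] D} (ht : φ.rTensor D t = 0) :
    ∃ x, ψ x ⊗ₜ d = t := by
  obtain ⟨m, hm0, hm, e, y, he, rfl⟩ := exists_eq_tmul_recip hD t
  rw [LinearMap.rTensor_tmul] at ht
  obtain ⟨w, hw⟩ := exists_eq_smul_of_tmul_eq_zero hm0 he ht
  set f : D := ⟨recip (n * m), recip_mem hD (hn.mul_left hm)⟩
  have hdf : d = (m : ℤ) • f := Subtype.ext <| by
    simp [f, hd, natCast_zsmul, nsmul_recip_mul n hm0]
  have hef : e = (n : ℤ) • f := Subtype.ext <| by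
    simp [f, he, natCast_zsmul, mul_comm n, nsmul_recip_mul m hn0]
  have hψw : (m : ℤ) • ψ w = (n : ℤ) • y :=
    hφ <| by rw [map_smul, map_smul, hφψ, hw, smul_comm]
  exact ⟨w, by rw [hdf, hef, ← smul_tmul, ← smul_tmul, hψw]⟩

noncomputable def quotientRangeEquivKerRTensor [Module.Free ℤ Y]
    (hD : ∀ x, x ∈ D ↔ (addOrderOf x).Coprime p) (hφ : Function.Injective φ)
    (hφψ : ∀ y, φ (ψ y) = (n : ℤ) • y) (hn0 : n ≠ 0) (hn : n.Coprime p) :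
    (Y ⧸ LinearMap.range φ) ≃ₗ[ℤ] LinearMap.ker (φ.rTensor D) :=
  let d : D := ⟨recip n, recip_mem hD hn⟩
  let θ := ((TensorProduct.mk ℤ Y D).flip d ∘ₗ ψ).codRestrict (LinearMap.ker (φ.rTensor D))
    fun y => by
      rw [LinearMap.mem_ker, LinearMap.comp_apply, LinearMap.flip_apply, mk_apply,
        LinearMap.rTensor_tmul, hφψ]
      exact smul_tmul_recip_eq_zero rfl y
  (Submodule.quotEquivOfEq _ _ <| by
      rw [LinearMap.ker_codRestrict, ker_flip_mk_comp hφ hφψ hn0 rfl]).trans <|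
    θ.quotKerEquivOfSurjective fun ⟨_, ht⟩ =>
      let ⟨x, hx⟩ := exists_tmul_eq_of_rTensor_apply_eq_zero hD hφ hφψ hn0 hn rfl ht
      ⟨x, Subtype.ext hx⟩

end QmodZ

theorem stmt17_general (p : ℕ) (hp : p.Prime)
    (Y : Type) [AddCommGroup Y] [Module.Free ℤ Y]
    (D : AddSubgroup (ℚ ⧸ AddSubgroup.zmultiples (1 : ℚ)))
    (hD : ∀ x, x ∈ D ↔ Nat.Coprime (addOrderOf x) p)
    (φ : Y →ₗ[ℤ] Y) (hinj : Function.Injective φ)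
    (hord : ¬ p ∣ Nat.card (Y ⧸ LinearMap.range φ)) :
    Function.Surjective (LinearMap.rTensor (↥D) φ) ∧
    Nonempty ((LinearMap.ker (LinearMap.rTensor (↥D) φ)) ≃+ (Y ⧸ LinearMap.range φ)) := by
  set n := Nat.card (Y ⧸ LinearMap.range φ)
  have hn0 : n ≠ 0 := fun h => hord (h ▸ dvd_zero p)
  have hn : n.Coprime p := (hp.coprime_iff_not_dvd.mpr hord).symm
  obtain ⟨ψ, hφψ⟩ :=
    LinearMap.exists_comp_eq_smul_of_injective hinj _ (LinearMap.range φ).natCard_quotient_smul_mem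
  exact ⟨LinearMap.rTensor_surjective_of_comp_eq_smul hφψ (QmodZ.zsmul_surjective hD hn0 hn),
    ⟨(QmodZ.quotientRangeEquivKerRTensor hD hinj (LinearMap.congr_fun hφψ) hn0 hn).symm.toAddEquiv⟩⟩

/-- Let `D ⊆ ℚ/ℤ` be the subgroup of elements of order prime to `p`, and let
`φ : Y → Y` be an injective endomorphism of a finitely generated free abelian
group with finite cokernel of order prime to `p`. Then `φ ⊗ id : Y ⊗ D → Y ⊗ D`
is surjective with kernel isomorphic to `Y/φ(Y)`. -/
theorem stmt17 (p : ℕ) (hp : p.Prime)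
    (Y : Type) [AddCommGroup Y] [Module.Free ℤ Y] [Module.Finite ℤ Y]
    (D : AddSubgroup (ℚ ⧸ AddSubgroup.zmultiples (1 : ℚ)))
    (hD : ∀ x, x ∈ D ↔ Nat.Coprime (addOrderOf x) p)
    (φ : Y →ₗ[ℤ] Y) (hinj : Function.Injective φ)
    (hfin : Finite (Y ⧸ LinearMap.range φ))
    (hord : ¬ p ∣ Nat.card (Y ⧸ LinearMap.range φ)) :
    Function.Surjective (LinearMap.rTensor (↥D) φ) ∧
    Nonempty ((LinearMap.ker (LinearMap.rTensor (↥D) φ)) ≃+ (Y ⧸ LinearMap.range φ)) :=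
  stmt17_general p hp Y D hD φ hinj hord
end
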